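/- arXiv:2502.10274 — 6 statements merged into one kernel-verified Lean document; each statement's English description precedes it below -/
import Mathlib

section
/- Let n ≥ 1 be an integer and let α be a real number with 1 ≤ α < 2. Then I_{n,α}(σ) tends to +∞ as σ tends to 1 (through σ > 0 with σ ≠ 1). -/
/-- `|σ - e^{iβ}| = √(σ² - 2σ cos β + 1)`. -/
noncomputable def Kker (σ β : ℝ) : ℝ := Real.sqrt (σ^2 - 2*σ*Real.cos β + 1)

/-- `I_{n,α}(σ) = (1/α) ∫_{-π}^{π} cos(nβ)/|σ - e^{iβ}|^α dβ`. -/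
noncomputable def Ifun (n : ℕ) (α σ : ℝ) : ℝ :=
  (1/α) * ∫ β in (-Real.pi)..Real.pi, Real.cos (n*β) / (Kker σ β) ^ α

/-!
Write `ε = |σ - 1|` and pick `δ ≤ 1/2` with `cos (n β) ≥ 1/2` for `|β| ≤ δ`. Since
`|σ - e^{iβ}|² = (σ - 1)² + 2σ(1 - cos β)`, on `ε ≤ β ≤ δ` we have `|σ - e^{iβ}| ≤ 2β ≤ 1`, so for
`α ≥ 1` the integrand is at least `1 / (4β)` there and that piece contributes `(1/4) log (δ / ε)`.
The integrand is nonnegative on `[-δ, ε]` and bounded independently of `σ` on `δ ≤ |β| ≤ π`,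
so the integral tends to `+∞` like `-(1/4) log |σ - 1|`.
-/

open Real Filter Topology MeasureTheory intervalIntegral
open scoped Interval

lemma Kker_eq_sqrt (σ β : ℝ) : Kker σ β = √((σ - 1) ^ 2 + 2 * σ * (1 - cos β)) := by
  unfold Kker; ring_nf

lemma continuous_Kker (σ : ℝ) : Continuous (Kker σ) := by
  unfold Kker; fun_prop

lemma Kker_pos {σ : ℝ} (hσ0 : 0 ≤ σ) (hσ1 : σ ≠ 1) (β : ℝ) : 0 < Kker σ β := by
  rw [Kker_eq_sqrt]
  have : 0 < (σ - 1) ^ 2 := sq_pos_of_ne_zero (sub_ne_zero.2 hσ1)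
  have := mul_nonneg (mul_nonneg zero_le_two hσ0) (sub_nonneg.2 (cos_le_one β))
  exact sqrt_pos.2 (by linarith)

lemma sqrt_one_sub_cos_le_Kker {σ β δ : ℝ} (hσ : 1 / 2 ≤ σ) (hβ : cos β ≤ cos δ) :
    √(1 - cos δ) ≤ Kker σ β := by
  rw [Kker_eq_sqrt]
  refine sqrt_le_sqrt ?_
  nlinarith [sq_nonneg (σ - 1), cos_le_one δ]

lemma Kker_le_two_mul {σ β : ℝ} (hσβ : |σ - 1| ≤ β) (hσ0 : 0 ≤ σ) (hσ3 : σ ≤ 3) :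
    Kker σ β ≤ 2 * β := by
  have hβ : 0 ≤ β := (abs_nonneg _).trans hσβ
  have hsq : (σ - 1) ^ 2 ≤ β ^ 2 := sq_le_sq' (abs_le.1 hσβ).1 (abs_le.1 hσβ).2
  have hcos : 1 - cos β ≤ β ^ 2 / 2 := by linarith [one_sub_sq_div_two_le_cos (x := β)]
  rw [Kker_eq_sqrt, ← sqrt_sq (by positivity : 0 ≤ 2 * β)]
  exact sqrt_le_sqrt (by nlinarith [mul_le_mul_of_nonneg_left hcos hσ0])

section Integrand

variable {n : ℕ} {α σ : ℝ}

lemma continuous_integrand (hσ0 : 0 ≤ σ) (hσ1 : σ ≠ 1) :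
    Continuous fun β => cos (n * β) / Kker σ β ^ α :=
  (continuous_cos.comp (continuous_const_mul _)).div
    ((continuous_Kker σ).rpow_const fun β => Or.inl (Kker_pos hσ0 hσ1 β).ne')
    fun β => (rpow_pos_of_pos (Kker_pos hσ0 hσ1 β) α).ne'

lemma abs_integrand_le {δ β : ℝ} (hα : 0 ≤ α) (hσ : 1 / 2 ≤ σ) (hδ : 0 < δ)
    (hδβ : δ ≤ |β|) (hβπ : |β| ≤ π) :
    |cos (n * β) / Kker σ β ^ α| ≤ 1 / √(1 - cos δ) ^ α := by
  have hcos : cos β ≤ cos δ := by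
    simpa using cos_le_cos_of_nonneg_of_le_pi hδ.le hβπ hδβ
  have hc : 0 < √(1 - cos δ) := by
    refine sqrt_pos.2 (sub_pos.2 ?_)
    simpa using cos_lt_cos_of_nonneg_of_le_pi le_rfl (hδβ.trans hβπ) hδ
  have hK := sqrt_one_sub_cos_le_Kker hσ hcos
  have hKα : 0 < Kker σ β ^ α := rpow_pos_of_pos (hc.trans_le hK) α
  rw [abs_div, abs_of_pos hKα]
  calc |cos (n * β)| / Kker σ β ^ α ≤ 1 / Kker σ β ^ α := by
        gcongr; exact abs_cos_le_one _
    _ ≤ 1 / √(1 - cos δ) ^ α := by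
        gcongr

lemma inv_four_mul_le_integrand {β : ℝ} (hα : 1 ≤ α) (hσ1 : σ ≠ 1) (hσβ : |σ - 1| ≤ β)
    (hβ : β ≤ 1 / 2) (hcos : 1 / 2 ≤ cos (n * β)) :
    (4 * β)⁻¹ ≤ cos (n * β) / Kker σ β ^ α := by
  have hσ := abs_le.1 (hσβ.trans hβ)
  have hK0 := Kker_pos (by linarith) hσ1 β
  have hK := Kker_le_two_mul hσβ (by linarith) (by linarith)
  have hKα : Kker σ β ^ α ≤ Kker σ β := by
    simpa using rpow_le_rpow_of_exponent_ge hK0 (by linarith) hα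
  have hKα0 : 0 < Kker σ β ^ α := rpow_pos_of_pos hK0 α
  calc (4 * β)⁻¹ = (1 / 2) / (2 * β) := by ring
    _ ≤ (1 / 2) / Kker σ β ^ α := by gcongr; linarith
    _ ≤ cos (n * β) / Kker σ β ^ α := by gcongr

lemma neg_le_integral_integrand_of_outer {a b δ : ℝ} (hα : 0 ≤ α) (hσ : 1 / 2 ≤ σ) (hδ : 0 < δ)
    (hab : a ≤ b) (hout : ∀ β ∈ Set.Ioc a b, δ ≤ |β| ∧ |β| ≤ π) :
    -(1 / √(1 - cos δ) ^ α * (b - a)) ≤ ∫ β in a..b, cos (n * β) / Kker σ β ^ α := by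
  rw [← abs_of_nonneg (sub_nonneg.2 hab)]
  refine neg_le_of_abs_le (intervalIntegral.norm_integral_le_of_norm_le_const (E := ℝ)
    fun β hβ => ?_)
  rw [Set.uIoc_of_le hab] at hβ
  exact abs_integrand_le hα hσ hδ (hout β hβ).1 (hout β hβ).2

lemma integral_integrand_ge {δ : ℝ} (hα : 1 ≤ α) (hδ0 : 0 < δ) (hδ : δ ≤ 1 / 2)
    (hcos : ∀ β, |β| ≤ δ → 1 / 2 ≤ cos (n * β)) (hσ1 : σ ≠ 1) (hσδ : |σ - 1| < δ) :
    1 / 4 * (log δ - log |σ - 1|) - 2 * π / √(1 - cos δ) ^ α ≤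
      ∫ β in (-π)..π, cos (n * β) / Kker σ β ^ α := by
  set ε := |σ - 1|
  have hε : 0 < ε := abs_pos.2 (sub_ne_zero.2 hσ1)
  have hσ := abs_lt.1 (hσδ.trans_le hδ)
  have hδπ : δ ≤ π := by linarith [pi_gt_three]
  have hint (a b : ℝ) : IntervalIntegrable (fun β => cos (n * β) / Kker σ β ^ α) volume a b :=
    (continuous_integrand (by linarith) hσ1).intervalIntegrable a b
  have hleft := neg_le_integral_integrand_of_outer (n := n) (α := α) (σ := σ) (by linarith)
    (by linarith) hδ0 (neg_le_neg hδπ) fun β hβ => by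
      rw [abs_of_neg (by linarith [hβ.2])]; constructor <;> linarith [hβ.1, hβ.2]
  have hright := neg_le_integral_integrand_of_outer (n := n) (α := α) (σ := σ) (by linarith)
    (by linarith) hδ0 hδπ fun β hβ => by
      rw [abs_of_pos (by linarith [hβ.1])]; constructor <;> linarith [hβ.1, hβ.2]
  have hcentre : 0 ≤ ∫ β in (-δ)..ε, cos (n * β) / Kker σ β ^ α := by
    refine integral_nonneg (by linarith) fun β hβ => div_nonneg ?_ (rpow_nonneg (sqrt_nonneg _) _)
    exact (hcos β (abs_le.2 ⟨hβ.1, by linarith [hβ.2]⟩)).trans' (by norm_num)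
  have hlog : 1 / 4 * (log δ - log ε) ≤ ∫ β in ε..δ, cos (n * β) / Kker σ β ^ α := by
    have h0 : (0 : ℝ) ∉ [[ε, δ]] := Set.notMem_uIcc_of_lt hε (hε.trans hσδ)
    calc 1 / 4 * (log δ - log ε) = ∫ β in ε..δ, 4⁻¹ * β⁻¹ := by
          rw [intervalIntegral.integral_const_mul, integral_inv h0, log_div hδ0.ne' hε.ne']; norm_num
      _ ≤ _ := by
        refine integral_mono_on hσδ.le ?_ (hint ε δ) fun β hβ => ?_
        · exact (intervalIntegrable_inv (f := fun β => β) (fun β hβ => ne_of_mem_of_not_mem hβ h0)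
            continuousOn_id).const_mul _
        · rw [← mul_inv]
          exact inv_four_mul_le_integrand hα hσ1 hβ.1 (hβ.2.trans hδ)
            (hcos β (by rw [abs_of_pos (hε.trans_le hβ.1)]; exact hβ.2))
  rw [← integral_add_adjacent_intervals (hint _ (-δ)) (hint _ π),
    ← integral_add_adjacent_intervals (hint _ ε) (hint _ π),
    ← integral_add_adjacent_intervals (hint _ δ) (hint _ π)]
  have : 0 ≤ 1 / √(1 - cos δ) ^ α * δ := by positivity
  linarith [mul_sub (1 / √(1 - cos δ) ^ α) π δ, div_eq_mul_one_div (2 * π) (√(1 - cos δ) ^ α)]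

end Integrand

lemma exists_forall_abs_le_half_le_cos_mul (n : ℕ) :
    ∃ δ > 0, δ ≤ 1 / 2 ∧ ∀ β, |β| ≤ δ → 1 / 2 ≤ cos (n * β) := by
  have hcont : Tendsto (fun β : ℝ => cos (n * β)) (𝓝 0) (𝓝 1) := by
    simpa using (continuous_cos.comp' (continuous_const_mul (n : ℝ))).tendsto 0
  obtain ⟨ε, hε, hball⟩ :=
    Metric.eventually_nhds_iff.1 (hcont.eventually (lt_mem_nhds (by norm_num : (1 : ℝ) / 2 < 1)))
  refine ⟨min (ε / 2) (1 / 2), by positivity, min_le_right _ _, fun β hβ => (hball ?_).le⟩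
  rw [Real.dist_eq, sub_zero]
  linarith [min_le_left (ε / 2) (1 / 2)]

lemma tendsto_log_abs_sub_one : Tendsto (fun σ => log |σ - 1|) (𝓝[≠] 1) atBot := by
  have hsub : Tendsto (fun σ : ℝ => σ - 1) (𝓝[≠] 1) (𝓝[≠] 0) :=
    tendsto_nhdsWithin_of_tendsto_nhds_of_eventually_within _
      (((continuous_sub_right 1).tendsto' 1 0 (sub_self 1)).mono_left nhdsWithin_le_nhds)
      (eventually_nhdsWithin_of_forall fun σ hσ => sub_ne_zero.2 hσ)
  simp_rw [log_abs]
  exact tendsto_log_nhdsNE_zero.comp hsub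

theorem stmt1_general (n : ℕ) (α : ℝ) (hα1 : 1 ≤ α) :
    Filter.Tendsto (Ifun n α)
      (nhdsWithin 1 {σ : ℝ | 0 < σ ∧ σ ≠ 1}) Filter.atTop := by
  obtain ⟨δ, hδ0, hδ, hcos⟩ := exists_forall_abs_le_half_le_cos_mul n
  have hlower : Tendsto (fun σ => 1 / 4 * (log δ - log |σ - 1|) - 2 * π / √(1 - cos δ) ^ α)
      (𝓝[≠] 1) atTop := by
    simp_rw [sub_eq_add_neg _ (2 * π / _)]
    refine tendsto_atTop_add_const_right _ _ (Tendsto.const_mul_atTop (by norm_num) ?_)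
    exact tendsto_atTop_add_const_left _ _ (tendsto_neg_atBot_atTop.comp tendsto_log_abs_sub_one)
  have hnear : ∀ᶠ σ in 𝓝[≠] 1, |σ - 1| < δ :=
    eventually_nhdsWithin_of_eventually_nhds (Metric.ball_mem_nhds 1 hδ0)
  have hJ : Tendsto (fun σ => ∫ β in (-π)..π, cos (n * β) / Kker σ β ^ α) (𝓝[≠] 1) atTop :=
    tendsto_atTop_mono' _ (by
      filter_upwards [hnear, self_mem_nhdsWithin] with σ hσ hσ1
      exact integral_integrand_ge hα1 hδ0 hδ hcos hσ1 hσ) hlower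
  exact (hJ.const_mul_atTop (by positivity)).mono_left (nhdsWithin_mono _ fun σ hσ => hσ.2)

theorem stmt1 (n : ℕ) (hn : 1 ≤ n) (α : ℝ) (hα1 : 1 ≤ α) (hα2 : α < 2) :
    Filter.Tendsto (Ifun n α)
      (nhdsWithin 1 {σ : ℝ | 0 < σ ∧ σ ≠ 1}) Filter.atTop :=
  stmt1_general n α hα1
end

section
/- Let n ≥ 1 be an integer and let α be a real number with 0 < α < 1. Then there exists a constant C > 0 such that for every σ > 0 with 0 < |σ − 1| ≤ 1/2 the function I_{n,α} is differentiable at σ with |I_{n,α}′(σ)| ≤ C·|1 − σ|^{−α}; consequently |I_{n,α}(σ) − I_{n,α}(1)| ≤ C·|1 − σ|^{1−α}/(1 − α) for all σ with 0 < |σ − 1| ≤ 1/2. -/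
/-!
Write `I_{n,α}(σ) = (1/α) ∫ cos(nβ) Q(σ,β)^{-α/2} dβ` with `Q(σ,β) = |σ - e^{iβ}|²`. For `σ ≥ 1/4`
and `|β| ≤ π`, `Q ≥ (σ - 1)²` and `Q ≥ (β/π)²`. Hence the `σ`-derivative of the integrand is
bounded by `α Q^{-(1+α)/2} ≤ α π^{1+α} max(|σ-1|, |β|)^{-(1+α)}`, whose integral is
`O(|σ - 1|^{-α})`: this justifies differentiating under the integral sign and bounds `I'`.
The integrand itself is bounded by `(|β|/π)^{-α}`, integrable because `α < 1`, so `I` is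
continuous up to `σ = 1` by dominated convergence, and integrating `|I'(t)| ≤ C |1 - t|^{-α}`
between `σ` and `1` gives the Hölder estimate.
-/

open Real Set MeasureTheory intervalIntegral
open scoped Interval

theorem abs_sub_le_of_abs_deriv_le_rpow_of_le {f f' : ℝ → ℝ} {a b C α : ℝ} (hab : a ≤ b)
    (hα : α < 1) (hf : ContinuousOn f (Icc a b)) (hf' : ∀ t ∈ Ico a b, HasDerivAt f (f' t) t)
    (hbound : ∀ t ∈ Ico a b, |f' t| ≤ C * (b - t) ^ (-α)) :
    |f b - f a| ≤ C * (b - a) ^ (1 - α) / (1 - α) := by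
  have hα' : 1 - α ≠ 0 := by linarith
  -- antiderivative of the bound, vanishing at `a`
  set B : ℝ → ℝ := fun x => C / (1 - α) * ((b - a) ^ (1 - α) - (b - x) ^ (1 - α))
  have hB : ContinuousOn B (Icc a b) :=
    continuousOn_const.mul <| continuousOn_const.sub <|
      (continuousOn_const.sub continuousOn_id).rpow_const fun _ _ => Or.inr (by linarith)
  have hB' : ∀ t ∈ Ico a b, HasDerivAt B (C * (b - t) ^ (-α)) t := by
    intro t ht
    have hbt : b - t ≠ 0 := by linarith [ht.2]
    have h := ((((hasDerivAt_id' t).const_sub b).rpow_const (p := 1 - α)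
      (Or.inl hbt)).const_sub ((b - a) ^ (1 - α))).const_mul (C / (1 - α))
    refine h.congr_deriv ?_
    rw [show 1 - α - 1 = -α by ring]
    field_simp
  have := image_norm_le_of_norm_deriv_right_le_deriv_boundary' (f := fun x => f x - f a)
    (hf.sub continuousOn_const) (fun t ht => ((hf' t ht).sub_const (f a)).hasDerivWithinAt)
    (by simp [B]) hB (fun t ht => (hB' t ht).hasDerivWithinAt) hbound (right_mem_Icc.2 hab)
  simpa [B, zero_rpow hα', mul_div_right_comm] using this

theorem abs_sub_le_of_abs_deriv_le_rpow {f f' : ℝ → ℝ} {a b C α : ℝ} (hα : α < 1)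
    (hf : ContinuousOn f (uIcc a b))
    (hf' : ∀ t ∈ uIcc a b, t ≠ b → HasDerivAt f (f' t) t ∧ |f' t| ≤ C * |b - t| ^ (-α)) :
    |f b - f a| ≤ C * |b - a| ^ (1 - α) / (1 - α) := by
  rcases le_total a b with hab | hba
  · rw [uIcc_of_le hab] at hf hf'
    rw [abs_of_nonneg (sub_nonneg.2 hab)]
    refine abs_sub_le_of_abs_deriv_le_rpow_of_le (f' := f') hab hα hf (fun t ht => ?_)
      fun t ht => ?_
    · exact (hf' t (Ico_subset_Icc_self ht) ht.2.ne).1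
    · simpa [abs_of_pos (sub_pos.2 ht.2)] using (hf' t (Ico_subset_Icc_self ht) ht.2.ne).2
  · -- the fencing lemma only runs rightwards: reflect so that the singular endpoint is on the right
    rw [uIcc_of_ge hba] at hf hf'
    have hneg : MapsTo (fun t : ℝ => -t) (Icc (-a) (-b)) (Icc b a) :=
      fun t ht => ⟨by linarith [ht.2], by linarith [ht.1]⟩
    have hf'neg : ∀ t ∈ Ico (-a) (-b),
        HasDerivAt f (f' (-t)) (-t) ∧ |f' (-t)| ≤ C * (-b - t) ^ (-α) := by
      intro t ht
      obtain ⟨hd, hbd⟩ := hf' (-t) (hneg (Ico_subset_Icc_self ht)) (by linarith [ht.2])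
      refine ⟨hd, ?_⟩
      rwa [show b - -t = -(-b - t) by ring, abs_neg,
        abs_of_pos (by linarith [ht.2] : 0 < -b - t)] at hbd
    have := abs_sub_le_of_abs_deriv_le_rpow_of_le (f := fun t => f (-t))
      (f' := fun t => -f' (-t)) (neg_le_neg hba) hα (hf.comp continuousOn_neg hneg)
      (fun t ht => ((hf'neg t ht).1.comp t (hasDerivAt_neg t)).congr_deriv (by ring))
      (fun t ht => by rw [abs_neg]; exact (hf'neg t ht).2)
    rw [abs_sub_comm b, abs_of_nonneg (sub_nonneg.2 hba)]
    simpa [neg_add_eq_sub] using this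

theorem rpow_neg_div_two_le_of_sq_le {d q p : ℝ} (hd : 0 < d) (hdq : d ^ 2 ≤ q) (hp : 0 ≤ p) :
    q ^ (-(p / 2)) ≤ d ^ (-p) := by
  calc q ^ (-(p / 2)) ≤ (d ^ 2) ^ (-(p / 2)) :=
        rpow_le_rpow_of_nonpos (by positivity) hdq (by linarith)
    _ = d ^ (-p) := by
        rw [← rpow_natCast, ← rpow_mul hd.le]
        ring_nf

theorem intervalIntegrable_abs_rpow {r : ℝ} (hr : -1 < r) (a b : ℝ) :
    IntervalIntegrable (fun x : ℝ => |x| ^ r) volume a b := by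
  have : LocallyIntegrable (fun x : ℝ => |x| ^ r) volume :=
    locallyIntegrable_of_norm_le_rpow (C := 1) (α := -r) (by simp) (by simp; linarith)
      (ae_of_all _ fun x => by simp [abs_of_nonneg (rpow_nonneg (abs_nonneg x) r)])
      (continuous_abs.measurable.pow_const r).aestronglyMeasurable
  exact (this.integrableOn_isCompact isCompact_uIcc).intervalIntegrable

theorem integral_max_abs_rpow_le {α δ a : ℝ} (hα : 0 < α) (hδ : 0 < δ) (hδa : δ ≤ a) :
    ∫ β in (-a)..a, max δ |β| ^ (-(1 + α)) ≤ (2 + 2 / α) * δ ^ (-α) := by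
  set f : ℝ → ℝ := fun β => max δ |β| ^ (-(1 + α))
  have hint : ∀ u v, IntervalIntegrable f volume u v := fun u v =>
    ((continuous_const.max continuous_abs).rpow_const fun β =>
      Or.inl (lt_max_of_lt_left hδ).ne').intervalIntegrable u v
  have hmid : ∫ β in (-δ)..δ, f β = 2 * δ ^ (-α) := by
    have : EqOn f (fun _ => δ ^ (-(1 + α))) (uIcc (-δ) δ) := fun β hβ => by
      rw [uIcc_of_le (by linarith)] at hβ
      simp [f, max_eq_left (abs_le.2 hβ)]
    rw [integral_congr this, intervalIntegral.integral_const, smul_eq_mul, sub_neg_eq_add,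
      ← two_mul, mul_assoc, ← rpow_one_add' hδ.le (by linarith)]
    ring_nf
  have hright : ∫ β in δ..a, f β ≤ δ ^ (-α) / α := by
    have : EqOn f (fun β => β ^ (-(1 + α))) (uIcc δ a) := fun β hβ => by
      rw [uIcc_of_le hδa] at hβ
      simp [f, abs_of_pos (hδ.trans_le hβ.1), max_eq_right hβ.1]
    have h0 : (0 : ℝ) ∉ uIcc δ a := by
      rw [uIcc_of_le hδa]; exact fun h => absurd h.1 (not_le.2 hδ)
    rw [integral_congr this, integral_rpow (Or.inr ⟨by linarith, h0⟩),
      show -(1 + α) + 1 = -α by ring, div_neg, ← neg_div, neg_sub]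
    gcongr
    linarith [rpow_nonneg (hδ.le.trans hδa) (-α)]
  have hleft : ∫ β in (-a)..(-δ), f β = ∫ β in δ..a, f β := by
    simpa [f] using (integral_comp_neg (a := δ) (b := a) f).symm
  rw [← integral_add_adjacent_intervals (hint _ (-δ)) (hint _ _),
    ← integral_add_adjacent_intervals (hint (-δ) δ) (hint _ _), hleft, hmid]
  have : (2 + 2 / α) * δ ^ (-α) = 2 * (δ ^ (-α) / α) + 2 * δ ^ (-α) := by ring
  linarith

namespace Ifun

noncomputable def distSq (σ β : ℝ) : ℝ := σ ^ 2 - 2 * σ * cos β + 1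

noncomputable def integrand (n : ℕ) (α σ β : ℝ) : ℝ := cos (n * β) * distSq σ β ^ (-(α / 2))

noncomputable def integrandDeriv (n : ℕ) (α σ β : ℝ) : ℝ :=
  -α * cos (n * β) * (σ - cos β) * distSq σ β ^ (-(α / 2) - 1)

theorem sq_sub_one_le_distSq {σ : ℝ} (hσ : 0 ≤ σ) (β : ℝ) : (σ - 1) ^ 2 ≤ distSq σ β := by
  unfold distSq
  nlinarith [cos_le_one β]

theorem sq_sub_cos_le_distSq (σ β : ℝ) : (σ - cos β) ^ 2 ≤ distSq σ β := by
  unfold distSq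
  nlinarith [cos_sq_add_sin_sq β, sq_nonneg (sin β)]

theorem sq_div_pi_le_distSq {σ β : ℝ} (hσ : 1 / 4 ≤ σ) (hβ : |β| ≤ π) :
    (β / π) ^ 2 ≤ distSq σ β := by
  have hcos := cos_le_one_sub_mul_cos_sq hβ
  have hπ : 0 < π ^ 2 := by positivity
  have : 2 / π ^ 2 * β ^ 2 = 2 * (β / π) ^ 2 := by field_simp
  unfold distSq
  nlinarith [sq_nonneg (σ - 1), sq_nonneg (β / π)]

theorem sq_max_div_pi_le_distSq {σ β : ℝ} (hσ : 1 / 4 ≤ σ) (hβ : |β| ≤ π) :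
    (max |σ - 1| |β| / π) ^ 2 ≤ distSq σ β := by
  rcases le_total |σ - 1| |β| with h | h
  · rw [max_eq_right h, div_pow, sq_abs, ← div_pow]
    exact sq_div_pi_le_distSq hσ hβ
  · rw [max_eq_left h]
    calc (|σ - 1| / π) ^ 2 ≤ |σ - 1| ^ 2 := by
          gcongr
          exact div_le_self (abs_nonneg _) (by linarith [pi_gt_three])
      _ ≤ distSq σ β := by rw [sq_abs]; exact sq_sub_one_le_distSq (by linarith) β

theorem eq_integral_integrand (n : ℕ) (α σ : ℝ) :
    Ifun n α σ = 1 / α * ∫ β in (-π)..π, integrand n α σ β := by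
  have hq : ∀ β, 0 ≤ distSq σ β := fun β => (sq_nonneg _).trans (sq_sub_cos_le_distSq σ β)
  rw [Ifun]
  congr 1
  refine intervalIntegral.integral_congr fun β _ => ?_
  rw [integrand, Kker, ← distSq, sqrt_eq_rpow, ← rpow_mul (hq β), div_eq_mul_inv,
    ← rpow_neg (hq β)]
  ring_nf

theorem hasDerivAt_integrand (n : ℕ) (α : ℝ) {σ β : ℝ} (hq : distSq σ β ≠ 0) :
    HasDerivAt (integrand n α · β) (integrandDeriv n α σ β) σ := by
  have hd : HasDerivAt (distSq · β) (2 * σ - 2 * cos β) σ :=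
    (((hasDerivAt_pow 2 σ).sub (((hasDerivAt_id' σ).const_mul 2).mul_const (cos β))).add_const
      1).congr_deriv (by ring)
  refine ((hd.rpow_const (Or.inl hq)).const_mul (cos (n * β))).congr_deriv ?_
  rw [integrandDeriv]
  ring

theorem abs_integrand_le {n : ℕ} {α σ β d : ℝ} (hα : 0 ≤ α) (hd : 0 < d)
    (hdq : d ^ 2 ≤ distSq σ β) : |integrand n α σ β| ≤ d ^ (-α) := by
  have hq : 0 ≤ distSq σ β := (sq_nonneg d).trans hdq
  rw [integrand, abs_mul, abs_of_nonneg (rpow_nonneg hq _)]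
  calc |cos (n * β)| * distSq σ β ^ (-(α / 2)) ≤ 1 * distSq σ β ^ (-(α / 2)) := by
        gcongr; exact abs_cos_le_one _
    _ ≤ d ^ (-α) := by rw [one_mul]; exact rpow_neg_div_two_le_of_sq_le hd hdq hα

theorem abs_integrandDeriv_le {n : ℕ} {α σ β d : ℝ} (hα : 0 ≤ α) (hd : 0 < d)
    (hdq : d ^ 2 ≤ distSq σ β) : |integrandDeriv n α σ β| ≤ α * d ^ (-(1 + α)) := by
  have hq : 0 < distSq σ β := (pow_pos hd 2).trans_le hdq
  have hsqrt : |σ - cos β| ≤ distSq σ β ^ (1 / 2 : ℝ) := by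
    rw [← sqrt_eq_rpow]; exact abs_le_sqrt (sq_sub_cos_le_distSq σ β)
  rw [integrandDeriv, abs_mul, abs_mul, abs_mul, abs_neg, abs_of_nonneg hα,
    abs_of_nonneg (rpow_nonneg hq.le _)]
  calc α * |cos (n * β)| * |σ - cos β| * distSq σ β ^ (-(α / 2) - 1)
      ≤ α * 1 * distSq σ β ^ (1 / 2 : ℝ) * distSq σ β ^ (-(α / 2) - 1) := by
        gcongr; exact abs_cos_le_one _
    _ = α * distSq σ β ^ (-((1 + α) / 2)) := by
        rw [mul_one, mul_assoc, ← rpow_add hq]; ring_nf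
    _ ≤ α * d ^ (-(1 + α)) := by
        gcongr; exact rpow_neg_div_two_le_of_sq_le hd hdq (by linarith)

theorem measurable_integrand (n : ℕ) (α σ : ℝ) : Measurable (integrand n α σ) := by
  unfold integrand distSq; fun_prop

theorem continuous_distSq_rpow {σ : ℝ} (hq : ∀ β, distSq σ β ≠ 0) (p : ℝ) :
    Continuous fun β => distSq σ β ^ p :=
  (by unfold distSq; fun_prop : Continuous (distSq σ)).rpow_const fun β => Or.inl (hq β)

theorem continuous_integrand (n : ℕ) (α : ℝ) {σ : ℝ} (hq : ∀ β, distSq σ β ≠ 0) :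
    Continuous (integrand n α σ) := by
  have := continuous_distSq_rpow hq (-(α / 2))
  unfold integrand; fun_prop

theorem continuous_integrandDeriv (n : ℕ) (α : ℝ) {σ : ℝ} (hq : ∀ β, distSq σ β ≠ 0) :
    Continuous (integrandDeriv n α σ) := by
  have := continuous_distSq_rpow hq (-(α / 2) - 1)
  unfold integrandDeriv; fun_prop

theorem hasDerivAt_integral_integrand (n : ℕ) {α σ : ℝ} (hα : 0 ≤ α) (hσ : 0 < σ)
    (hσ1 : σ ≠ 1) :
    HasDerivAt (fun x => ∫ β in (-π)..π, integrand n α x β)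
      (∫ β in (-π)..π, integrandDeriv n α σ β) σ := by
  set d := |σ - 1| / 2 with hd_def
  have hd : 0 < d := by positivity [sub_ne_zero.2 hσ1]
  set U := Metric.ball σ (min σ d)
  have hdU : ∀ x ∈ U, ∀ β, d ^ 2 ≤ distSq x β := by
    intro x hx β
    rw [Metric.mem_ball, Real.dist_eq, lt_min_iff] at hx
    have htri := abs_sub_le σ x 1
    rw [abs_sub_comm σ x] at htri
    have hdx : d ≤ |x - 1| := by linarith
    have hx0 : 0 ≤ x := by linarith [neg_abs_le (x - σ)]
    calc d ^ 2 ≤ |x - 1| ^ 2 := pow_le_pow_left₀ hd.le hdx 2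
      _ ≤ distSq x β := by rw [sq_abs]; exact sq_sub_one_le_distSq hx0 β
  have hq : ∀ x ∈ U, ∀ β, distSq x β ≠ 0 := fun x hx β =>
    ((pow_pos hd 2).trans_le (hdU x hx β)).ne'
  have hσU : σ ∈ U := Metric.mem_ball_self (lt_min hσ hd)
  refine (hasDerivAt_integral_of_dominated_loc_of_deriv_le (bound := fun _ => α * d ^ (-(1 + α)))
    (Metric.ball_mem_nhds σ (lt_min hσ hd))
    (Filter.Eventually.of_forall fun x => (measurable_integrand n α x).aestronglyMeasurable)
    ((continuous_integrand n α (hq σ hσU)).intervalIntegrable _ _)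
    (continuous_integrandDeriv n α (hq σ hσU)).aestronglyMeasurable
    (ae_of_all _ fun β _ x hx => abs_integrandDeriv_le hα hd (hdU x hx β))
    intervalIntegrable_const
    (ae_of_all _ fun β _ x hx => hasDerivAt_integrand n α (hq x hx β))).2

theorem abs_integral_integrandDeriv_le (n : ℕ) {α σ : ℝ} (hα : 0 < α) (hσ : 1 / 4 ≤ σ)
    (hσ1 : σ ≠ 1) (hσπ : |σ - 1| ≤ π) :
    |∫ β in (-π)..π, integrandDeriv n α σ β|
      ≤ α * π ^ (1 + α) * ((2 + 2 / α) * |σ - 1| ^ (-α)) := by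
  have hδ : 0 < |σ - 1| := abs_pos.2 (sub_ne_zero.2 hσ1)
  have hpt : ∀ β ∈ Ioc (-π) π, ‖integrandDeriv n α σ β‖
      ≤ α * π ^ (1 + α) * max |σ - 1| |β| ^ (-(1 + α)) := by
    intro β hβ
    have hm : 0 < max |σ - 1| |β| := lt_max_of_lt_left hδ
    calc ‖integrandDeriv n α σ β‖ ≤ α * (max |σ - 1| |β| / π) ^ (-(1 + α)) :=
          abs_integrandDeriv_le hα.le (by positivity)
            (sq_max_div_pi_le_distSq hσ (abs_le.2 ⟨hβ.1.le, hβ.2⟩))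
      _ = α * π ^ (1 + α) * max |σ - 1| |β| ^ (-(1 + α)) := by
          rw [div_rpow hm.le pi_pos.le, rpow_neg pi_pos.le, div_inv_eq_mul]; ring
  have hint : IntervalIntegrable (fun β => max |σ - 1| |β| ^ (-(1 + α))) volume (-π) π :=
    ((continuous_const.max continuous_abs).rpow_const fun β =>
      Or.inl (lt_max_of_lt_left hδ).ne').intervalIntegrable _ _
  calc |∫ β in (-π)..π, integrandDeriv n α σ β|
      ≤ ∫ β in (-π)..π, α * π ^ (1 + α) * max |σ - 1| |β| ^ (-(1 + α)) :=
        norm_integral_le_of_norm_le (by linarith [pi_pos]) (ae_of_all _ hpt) (hint.const_mul _)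
    _ = α * π ^ (1 + α) * ∫ β in (-π)..π, max |σ - 1| |β| ^ (-(1 + α)) := integral_const_mul _ _
    _ ≤ α * π ^ (1 + α) * ((2 + 2 / α) * |σ - 1| ^ (-α)) := by
        gcongr; exact integral_max_abs_rpow_le hα hδ hσπ

theorem hasDerivAt (n : ℕ) {α σ : ℝ} (hα : 0 ≤ α) (hσ : 0 < σ) (hσ1 : σ ≠ 1) :
    HasDerivAt (Ifun n α) (1 / α * ∫ β in (-π)..π, integrandDeriv n α σ β) σ := by
  rw [funext (eq_integral_integrand n α)]
  exact (hasDerivAt_integral_integrand n hα hσ hσ1).const_mul _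

theorem abs_deriv_le (n : ℕ) {α σ : ℝ} (hα : 0 < α) (hσ : 1 / 4 ≤ σ) (hσ1 : σ ≠ 1)
    (hσπ : |σ - 1| ≤ π) :
    |deriv (Ifun n α) σ| ≤ π ^ (1 + α) * (2 + 2 / α) * |σ - 1| ^ (-α) := by
  rw [(hasDerivAt n hα.le (by linarith) hσ1).deriv, abs_mul, abs_of_pos (by positivity)]
  calc 1 / α * |∫ β in (-π)..π, integrandDeriv n α σ β|
      ≤ 1 / α * (α * π ^ (1 + α) * ((2 + 2 / α) * |σ - 1| ^ (-α))) := by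
        gcongr; exact abs_integral_integrandDeriv_le n hα hσ hσ1 hσπ
    _ = π ^ (1 + α) * (2 + 2 / α) * |σ - 1| ^ (-α) := by field_simp

theorem continuousOn (n : ℕ) {α : ℝ} (hα0 : 0 ≤ α) (hα1 : α < 1) :
    ContinuousOn (Ifun n α) (Ioi (1 / 4)) := by
  intro σ hσ
  rw [funext (eq_integral_integrand n α)]
  refine (ContinuousAt.const_mul ?_ _).continuousWithinAt
  have hbound : ∀ x, 1 / 4 ≤ x → ∀ β ∈ Ι (-π) π, β ≠ 0 →
      ‖integrand n α x β‖ ≤ π ^ α * |β| ^ (-α) := by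
    intro x hx β hβ hβ0
    rw [uIoc_of_le (by linarith [pi_pos])] at hβ
    calc ‖integrand n α x β‖ ≤ (|β| / π) ^ (-α) := by
          refine abs_integrand_le hα0 (by positivity) ?_
          rw [div_pow, sq_abs, ← div_pow]
          exact sq_div_pi_le_distSq hx (abs_le.2 ⟨hβ.1.le, hβ.2⟩)
      _ = π ^ α * |β| ^ (-α) := by
          rw [div_rpow (abs_nonneg β) pi_pos.le, rpow_neg pi_pos.le, div_inv_eq_mul, mul_comm]
  refine continuousAt_of_dominated_interval (bound := fun β => π ^ α * |β| ^ (-α))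
    (Filter.Eventually.of_forall fun x => (measurable_integrand n α x).aestronglyMeasurable)
    ?_ ((intervalIntegrable_abs_rpow (r := -α) (by linarith) _ _).const_mul (π ^ α)) ?_
  · filter_upwards [Ioi_mem_nhds hσ] with x hx
    filter_upwards [Measure.ae_ne volume 0] with β hβ0 hβ
    exact hbound x (le_of_lt hx) β hβ hβ0
  · filter_upwards [Measure.ae_ne volume 0] with β hβ0 hβ
    rw [uIoc_of_le (by linarith [pi_pos])] at hβ
    have hq : distSq σ β ≠ 0 := (lt_of_lt_of_le (by positivity)
      (sq_div_pi_le_distSq (le_of_lt hσ) (abs_le.2 ⟨hβ.1.le, hβ.2⟩))).ne'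
    exact continuousAt_const.mul
      ((by unfold distSq; fun_prop : Continuous (distSq · β)).continuousAt.rpow_const (Or.inl hq))

end Ifun

theorem stmt2_general (n : ℕ) (α : ℝ) (hα0 : 0 < α) (hα1 : α < 1) :
    ∃ C > (0:ℝ),
      (∀ σ : ℝ, 0 < σ → 0 < |σ - 1| → |σ - 1| ≤ 1/2 →
        DifferentiableAt ℝ (Ifun n α) σ ∧
          |deriv (Ifun n α) σ| ≤ C * |1 - σ| ^ (-α)) ∧
      (∀ σ : ℝ, 0 < σ → 0 < |σ - 1| → |σ - 1| ≤ 1/2 →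
        |Ifun n α σ - Ifun n α 1| ≤ C * |1 - σ| ^ (1 - α) / (1 - α)) := by
  have hderiv : ∀ σ : ℝ, 0 < |σ - 1| → |σ - 1| ≤ 1 / 2 →
      HasDerivAt (Ifun n α) (deriv (Ifun n α) σ) σ ∧
        |deriv (Ifun n α) σ| ≤ π ^ (1 + α) * (2 + 2 / α) * |1 - σ| ^ (-α) := by
    intro σ h0 h1
    have hσ : 1 / 4 ≤ σ := by linarith [neg_abs_le (σ - 1)]
    have hσ1 : σ ≠ 1 := sub_ne_zero.1 (abs_pos.1 h0)
    refine ⟨(Ifun.hasDerivAt n hα0.le (by linarith) hσ1).differentiableAt.hasDerivAt, ?_⟩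
    rw [abs_sub_comm]
    exact Ifun.abs_deriv_le n hα0 hσ hσ1 (by linarith [pi_gt_three])
  refine ⟨π ^ (1 + α) * (2 + 2 / α), by positivity, fun σ _ h0 h1 =>
    ⟨(hderiv σ h0 h1).1.differentiableAt, (hderiv σ h0 h1).2⟩, fun σ _ h0 h1 => ?_⟩
  have hmem : ∀ t ∈ uIcc σ 1, |t - 1| ≤ |σ - 1| := fun t ht => by
    simpa only [abs_sub_comm _ (1 : ℝ)] using abs_sub_right_of_mem_uIcc ht
  rw [abs_sub_comm]
  refine abs_sub_le_of_abs_deriv_le_rpow hα1 ?_ fun t ht ht1 =>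
    hderiv t (abs_pos.2 (sub_ne_zero.2 ht1)) ((hmem t ht).trans h1)
  refine (Ifun.continuousOn n hα0.le hα1).mono fun t ht => ?_
  have := hmem t ht
  rw [mem_Ioi]
  linarith [neg_abs_le (t - 1)]

theorem stmt2 (n : ℕ) (hn : 1 ≤ n) (α : ℝ) (hα0 : 0 < α) (hα1 : α < 1) :
    ∃ C > (0:ℝ),
      (∀ σ : ℝ, 0 < σ → 0 < |σ - 1| → |σ - 1| ≤ 1/2 →
        DifferentiableAt ℝ (Ifun n α) σ ∧
          |deriv (Ifun n α) σ| ≤ C * |1 - σ| ^ (-α)) ∧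
      (∀ σ : ℝ, 0 < σ → 0 < |σ - 1| → |σ - 1| ≤ 1/2 →
        |Ifun n α σ - Ifun n α 1| ≤ C * |1 - σ| ^ (1 - α) / (1 - α)) :=
  stmt2_general n α hα0 hα1
end

section
/- Let n ≥ 2 be an integer and let α be a real number with 0 < α < 3 and α ≠ 1. Then J_{n,α}(1) = D_α · (1 − F_n(α))/(1 − α). -/
/-- `J_{n,α}(σ) = (1/α) ∫_{-π}^{π} (cos β - cos(nβ))/|σ - e^{iβ}|^α dβ`. -/
noncomputable def Jfun (n : ℕ) (α σ : ℝ) : ℝ :=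
  (1/α) * ∫ β in (-Real.pi)..Real.pi, (Real.cos β - Real.cos (n*β)) / (Kker σ β) ^ α

/-- `D_α = (2√π/2^α) Γ((3-α)/2)/Γ(2-α/2)`. -/
noncomputable def Dconst (α : ℝ) : ℝ :=
  (2 * Real.sqrt Real.pi / (2:ℝ) ^ α) * Real.Gamma ((3-α)/2) / Real.Gamma (2 - α/2)

/-- `F_n(α) = ∏_{k=1}^{n-1} (2k+α)/(2k+2-α)`. -/
noncomputable def Ffun (n : ℕ) (α : ℝ) : ℝ :=
  ∏ k ∈ Finset.Icc 1 (n-1), (2*(k:ℝ)+α)/(2*(k:ℝ)+(2-α))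

/-!
At `σ = 1` the kernel is `2 |sin (β / 2)|`, so after `β = 2θ` and symmetry `α J_{n,α}(1)` is
`2^(2-α) ∫₀^{π/2} (cos 2θ - cos 2nθ) sin^{-α} θ dθ`. Telescoping
`cos 2mθ - cos 2(m+1)θ = 2 sin (2m+1)θ sin θ` writes this as a sum of the integrals
`B_m = ∫₀^{π/2} sin (2m+1)θ sin^{1-α} θ dθ`, and integrating `sin (2m+2)θ sin^{2-α} θ` by parts
gives `(2m+4-α) B_{m+1} = (2m+α) B_m`. Hence `(2m+2-α) B_m = α F_m B_0`, the sum telescopes to a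
multiple of `1 - F_n`, and `B_0 = ∫₀^{π/2} sin^{2-α}` is a Beta integral, which produces `D_α`.
-/

open Real MeasureTheory intervalIntegral Set Filter Topology

lemma abs_sin_nat_mul_le (k : ℕ) (x : ℝ) : |sin (k * x)| ≤ k * |sin x| := by
  induction k with
  | zero => simp
  | succ k ih =>
    rw [Nat.cast_succ, add_mul, one_mul, sin_add]
    calc |sin (k * x) * cos x + cos (k * x) * sin x|
        ≤ |sin (k * x)| * |cos x| + |cos (k * x)| * |sin x| := by
          rw [← abs_mul, ← abs_mul]; exact abs_add_le _ _
      _ ≤ k * |sin x| * 1 + 1 * |sin x| := by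
          gcongr
          exacts [abs_cos_le_one x, abs_cos_le_one _]
      _ = (k + 1) * |sin x| := by ring

lemma sin_pos_of_mem_Ioc_zero_pi_div_two {θ : ℝ} (hθ : θ ∈ Ioc 0 (π / 2)) : 0 < sin θ :=
  sin_pos_of_pos_of_lt_pi hθ.1 (hθ.2.trans_lt (by linarith [pi_pos]))

lemma cos_two_mul_sub_cos_nat_mul_two_mul {n : ℕ} (hn : 2 ≤ n) (θ : ℝ) :
    cos (2 * θ) - cos (n * (2 * θ))
      = ∑ m ∈ Finset.Icc 1 (n - 1), 2 * sin ((2 * m + 1) * θ) * sin θ := by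
  have hterm : ∀ m : ℕ, 2 * sin ((2 * m + 1) * θ) * sin θ
      = -cos (((m + 1 : ℕ) : ℝ) * (2 * θ)) - -cos ((m : ℝ) * (2 * θ)) := by
    intro m
    have hsucc : ((m + 1 : ℕ) : ℝ) * (2 * θ) = (2 * m + 1) * θ + θ := by push_cast; ring
    have hself : (m : ℝ) * (2 * θ) = (2 * m + 1) * θ - θ := by ring
    rw [hsucc, hself, cos_add, cos_sub]
    ring
  simp_rw [hterm]
  rw [Finset.sum_Icc_sub (f := fun m : ℕ => -cos ((m : ℝ) * (2 * θ))) (by omega),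
    Nat.sub_add_cancel (by omega), Nat.cast_one, one_mul]
  ring

lemma intervalIntegrable_sin_rpow {c : ℝ} (hc : -1 < c) :
    IntervalIntegrable (fun θ => sin θ ^ c) volume 0 (π / 2) := by
  have hpi := pi_pos
  -- for `c < 0`, Jordan's inequality `2θ/π ≤ sin θ` gives `sin θ ^ c ≤ (2θ/π) ^ c`
  have hdom : IntervalIntegrable (fun θ => (2 / π) ^ c * θ ^ c + 1) volume 0 (π / 2) :=
    ((intervalIntegrable_rpow' hc).const_mul _).add intervalIntegrable_const
  rw [intervalIntegrable_iff_integrableOn_Ioc_of_le (by positivity)] at hdom ⊢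
  refine hdom.mono' (by fun_prop : Measurable fun θ => sin θ ^ c).aestronglyMeasurable ?_
  filter_upwards [ae_restrict_mem measurableSet_Ioc] with θ hθ
  have hs := sin_pos_of_mem_Ioc_zero_pi_div_two hθ
  have hθ0 : 0 < θ := hθ.1
  have hdom_nonneg : 0 ≤ (2 / π) ^ c * θ ^ c := by positivity
  rw [norm_of_nonneg (rpow_nonneg hs.le c)]
  rcases le_or_gt 0 c with hc0 | hc0
  · linarith [rpow_le_one hs.le (sin_le_one θ) hc0]
  · calc sin θ ^ c ≤ (2 / π * θ) ^ c :=
          rpow_le_rpow_of_nonpos (by positivity) (mul_le_sin hθ.1.le hθ.2) hc0.le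
      _ = (2 / π) ^ c * θ ^ c := mul_rpow (by positivity) hθ0.le
      _ ≤ _ := le_add_of_nonneg_right zero_le_one

lemma intervalIntegrable_sin_nat_mul_mul_sin_rpow (k : ℕ) {c : ℝ} (hc : -2 < c) :
    IntervalIntegrable (fun θ => sin (k * θ) * sin θ ^ c) volume 0 (π / 2) := by
  have hdom := (intervalIntegrable_sin_rpow (c := c + 1) (by linarith)).const_mul (k : ℝ)
  rw [intervalIntegrable_iff_integrableOn_Ioc_of_le (by linarith [pi_pos])] at hdom ⊢
  refine hdom.mono'
    (by fun_prop : Measurable fun θ => sin (k * θ) * sin θ ^ c).aestronglyMeasurable ?_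
  filter_upwards [ae_restrict_mem measurableSet_Ioc] with θ hθ
  have hs := sin_pos_of_mem_Ioc_zero_pi_div_two hθ
  calc ‖sin (k * θ) * sin θ ^ c‖ = |sin (k * θ)| * sin θ ^ c := by
        rw [norm_mul, norm_of_nonneg (rpow_nonneg hs.le c), Real.norm_eq_abs]
    _ ≤ k * sin θ * sin θ ^ c := by
        gcongr
        simpa [abs_of_pos hs] using abs_sin_nat_mul_le k θ
    _ = k * sin θ ^ (c + 1) := by rw [rpow_add_one hs.ne']; ring

theorem integral_rpow_mul_one_sub_rpow {u v : ℝ} (hu : 0 < u) (hv : 0 < v) :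
    ∫ x in 0..1, x ^ (u - 1) * (1 - x) ^ (v - 1) = Gamma u * Gamma v / Gamma (u + v) := by
  have hB := Complex.betaIntegral_eq_Gamma_mul_div u v (by simpa) (by simpa)
  rw [← Complex.ofReal_add, Complex.Gamma_ofReal, Complex.Gamma_ofReal, Complex.Gamma_ofReal,
    Complex.betaIntegral] at hB
  have hreal : ∫ x in (0 : ℝ)..1, (x : ℂ) ^ ((u : ℂ) - 1) * (1 - (x : ℂ)) ^ ((v : ℂ) - 1)
      = ((∫ x in (0 : ℝ)..1, x ^ (u - 1) * (1 - x) ^ (v - 1) : ℝ) : ℂ) := by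
    rw [← intervalIntegral.integral_ofReal]
    refine integral_congr fun x hx => ?_
    rw [uIcc_of_le zero_le_one] at hx
    push_cast [Complex.ofReal_cpow hx.1, Complex.ofReal_cpow (sub_nonneg.2 hx.2)]
    rfl
  rw [hreal] at hB
  exact_mod_cast hB

theorem integral_sin_rpow {c : ℝ} (hc : -1 < c) :
    ∫ θ in 0..π / 2, sin θ ^ c = √π * Gamma ((c + 1) / 2) / (2 * Gamma (c / 2 + 1)) := by
  have hpi := pi_pos
  -- the substitution `x = sin² θ` turns the integral into `B((c+1)/2, 1/2) / 2`
  have hsub := integral_comp_mul_deriv_of_deriv_nonneg (a := 0) (b := π / 2)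
    (f := fun θ => sin θ ^ 2) (f' := fun θ => 2 * sin θ * cos θ)
    (g := fun x => x ^ ((c + 1) / 2 - 1) * (1 - x) ^ ((1 / 2 : ℝ) - 1))
    (by fun_prop)
    (fun θ _ => ((hasDerivAt_sin θ).pow 2).congr_deriv (by ring))
    (fun θ hθ => by
      rw [min_eq_left (by positivity), max_eq_right (by positivity)] at hθ
      have := sin_pos_of_mem_Ioc_zero_pi_div_two (Ioo_subset_Ioc_self hθ)
      have := cos_pos_of_mem_Ioo ⟨by linarith [hθ.1], hθ.2⟩
      positivity)
  rw [sin_zero, sin_pi_div_two, zero_pow two_ne_zero, one_pow,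
    integral_rpow_mul_one_sub_rpow (by linarith) one_half_pos, Gamma_one_half_eq,
    show (c + 1) / 2 + 1 / 2 = c / 2 + 1 by ring] at hsub
  have hintegrand : EqOn (fun θ => ((fun x => x ^ ((c + 1) / 2 - 1) * (1 - x) ^ ((1 / 2 : ℝ) - 1))
      ∘ fun θ => sin θ ^ 2) θ * (2 * sin θ * cos θ)) (fun θ => 2 * sin θ ^ c) (Ioo 0 (π / 2)) := by
    intro θ hθ
    have hs := sin_pos_of_mem_Ioc_zero_pi_div_two (Ioo_subset_Ioc_self hθ)
    have hcos := cos_pos_of_mem_Ioo ⟨by linarith [hθ.1], hθ.2⟩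
    have hsin_sq : (sin θ ^ 2) ^ ((c + 1) / 2 - 1) = sin θ ^ c / sin θ := by
      rw [← rpow_natCast, ← rpow_mul hs.le, ← rpow_sub_one hs.ne']
      congr 1
      push_cast
      ring
    have hcos_sq : (1 - sin θ ^ 2) ^ ((1 / 2 : ℝ) - 1) = (cos θ)⁻¹ := by
      rw [← cos_sq', ← rpow_natCast, ← rpow_mul hcos.le, ← rpow_neg_one]
      norm_num
    simp only [Function.comp_apply, hsin_sq, hcos_sq]
    field_simp
  rw [integral_congr_Ioo_of_le (by positivity) hintegrand, intervalIntegral.integral_const_mul]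
    at hsub
  linear_combination hsub / 2

noncomputable def oddSinIntegral (c : ℝ) (m : ℕ) : ℝ :=
  ∫ θ in 0..π / 2, sin ((2 * m + 1) * θ) * sin θ ^ c

lemma intervalIntegrable_sin_odd_mul_mul_sin_rpow (m : ℕ) {c : ℝ} (hc : -2 < c) :
    IntervalIntegrable (fun θ => sin ((2 * m + 1) * θ) * sin θ ^ c) volume 0 (π / 2) := by
  simpa using intervalIntegrable_sin_nat_mul_mul_sin_rpow (2 * m + 1) hc

lemma oddSinIntegral_zero (c : ℝ) : oddSinIntegral c 0 = ∫ θ in 0..π / 2, sin θ ^ (c + 1) := by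
  refine integral_congr_Ioo_of_le (by linarith [pi_pos]) fun θ hθ => ?_
  rw [rpow_add_one (sin_pos_of_mem_Ioc_zero_pi_div_two (Ioo_subset_Ioc_self hθ)).ne']
  simp [mul_comm]

theorem oddSinIntegral_succ {c : ℝ} (hc : -2 < c) (m : ℕ) :
    (2 * m + 3 + c) * oddSinIntegral c (m + 1) = (2 * m + 1 - c) * oddSinIntegral c m := by
  have hpi := pi_pos
  set k : ℕ := 2 * m + 2
  -- integrate by parts against `F`, which vanishes at both ends
  set F : ℝ → ℝ := fun θ => sin (k * θ) * sin θ ^ (c + 1)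
  have hF' : ∀ θ ∈ Ioo 0 (π / 2), HasDerivAt F
      ((2 * m + 3 + c) / 2 * (sin ((2 * ((m + 1 : ℕ) : ℝ) + 1) * θ) * sin θ ^ c)
        - (2 * m + 1 - c) / 2 * (sin ((2 * m + 1) * θ) * sin θ ^ c)) θ := by
    intro θ hθ
    have hs := sin_pos_of_mem_Ioc_zero_pi_div_two (Ioo_subset_Ioc_self hθ)
    have hF := ((hasDerivAt_id θ).const_mul (k : ℝ)).sin.mul
      ((hasDerivAt_sin θ).rpow_const (p := c + 1) (Or.inl hs.ne'))
    refine hF.congr_deriv ?_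
    simp only [id, mul_one]
    have hsucc : (2 * ((m + 1 : ℕ) : ℝ) + 1) * θ = k * θ + θ := by push_cast [k]; ring
    have hself : (2 * (m : ℝ) + 1) * θ = k * θ - θ := by push_cast [k]; ring
    rw [hsucc, hself, sin_add, sin_sub, add_sub_cancel_right, rpow_add_one hs.ne']
    push_cast [k]
    ring
  have hF0 : Tendsto F (𝓝[>] 0) (𝓝 0) := by
    have hdom : Tendsto (fun θ => k * sin θ ^ (c + 2)) (𝓝[>] 0) (𝓝 0) := by
      have := ((continuous_sin.continuousAt (x := 0)).rpow_const (p := c + 2)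
        (Or.inr (by linarith))).const_mul (k : ℝ)
      simpa [zero_rpow (by linarith : c + 2 ≠ 0)] using this.tendsto.mono_left nhdsWithin_le_nhds
    refine squeeze_zero_norm' ?_ hdom
    filter_upwards [Ioc_mem_nhdsGT (by positivity : (0 : ℝ) < π / 2)] with θ hθ
    have hs := sin_pos_of_mem_Ioc_zero_pi_div_two hθ
    calc ‖F θ‖ = |sin (k * θ)| * sin θ ^ (c + 1) := by
          rw [norm_mul, norm_of_nonneg (rpow_nonneg hs.le _), Real.norm_eq_abs]
      _ ≤ k * sin θ * sin θ ^ (c + 1) := by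
          gcongr
          simpa [abs_of_pos hs] using abs_sin_nat_mul_le k θ
      _ = k * sin θ ^ (c + 2) := by
          rw [show c + 2 = c + 1 + 1 by ring, rpow_add_one hs.ne' (c + 1)]; ring
  have hFπ : Tendsto F (𝓝[<] (π / 2)) (𝓝 0) := by
    have hcont : ContinuousAt F (π / 2) := by
      refine (continuous_sin.comp (continuous_const.mul continuous_id)).continuousAt.mul ?_
      exact continuous_sin.continuousAt.rpow_const (Or.inl (by simp))
    have hval : F (π / 2) = 0 := by
      simp only [F, sin_pi_div_two, one_rpow, mul_one]
      rw [show (k : ℝ) * (π / 2) = ((m + 1 : ℕ) : ℝ) * π by push_cast [k]; ring, sin_nat_mul_pi]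
    simpa [hval] using hcont.tendsto.mono_left nhdsWithin_le_nhds
  have hint_succ := intervalIntegrable_sin_odd_mul_mul_sin_rpow (m + 1) hc
  have hint_self := intervalIntegrable_sin_odd_mul_mul_sin_rpow m hc
  have hFTC := integral_eq_sub_of_hasDerivAt_of_tendsto (by positivity) hF'
    ((hint_succ.const_mul _).sub (hint_self.const_mul _)) hF0 hFπ
  rw [integral_sub (hint_succ.const_mul _) (hint_self.const_mul _),
    intervalIntegral.integral_const_mul, intervalIntegral.integral_const_mul] at hFTC
  unfold oddSinIntegral
  linarith

lemma Ffun_one (α : ℝ) : Ffun 1 α = 1 := by simp [Ffun]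

lemma Ffun_succ (α : ℝ) {m : ℕ} (hm : 1 ≤ m) :
    Ffun (m + 1) α = Ffun m α * ((2 * m + α) / (2 * m + (2 - α))) := by
  obtain ⟨k, rfl⟩ := Nat.exists_eq_add_of_le' hm
  simp only [Ffun, Nat.add_sub_cancel, Finset.prod_Icc_succ_top (by omega : 1 ≤ k + 1)]

theorem mul_oddSinIntegral_eq_Ffun_mul {α : ℝ} (hα3 : α < 3) {m : ℕ} (hm : 1 ≤ m) :
    (2 * m + 2 - α) * oddSinIntegral (1 - α) m = α * Ffun m α * oddSinIntegral (1 - α) 0 := by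
  have hc : -2 < 1 - α := by linarith
  induction m, hm using Nat.le_induction with
  | base =>
    have h := oddSinIntegral_succ hc 0
    rw [Ffun_one]
    push_cast at h ⊢
    linarith
  | succ m hm ih =>
    have h := oddSinIntegral_succ hc m
    have hpos : 0 < 2 * (m : ℝ) + (2 - α) := by
      have : (1 : ℝ) ≤ m := by exact_mod_cast hm
      linarith
    rw [Ffun_succ α hm]
    field_simp
    push_cast
    linear_combination (2 * (m : ℝ) + (2 - α)) * h + (2 * m + α) * ih

theorem one_sub_mul_sum_oddSinIntegral {α : ℝ} (hα3 : α < 3) {n : ℕ} (hn : 2 ≤ n) :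
    (1 - α) * ∑ m ∈ Finset.Icc 1 (n - 1), 2 * oddSinIntegral (1 - α) m
      = α * oddSinIntegral (1 - α) 0 * (1 - Ffun n α) := by
  have hterm : ∀ m ∈ Finset.Icc 1 (n - 1), (1 - α) * (2 * oddSinIntegral (1 - α) m)
      = -(α * oddSinIntegral (1 - α) 0) * (Ffun (m + 1) α - Ffun m α) := by
    intro m hm
    have hm1 := (Finset.mem_Icc.1 hm).1
    have hpos : 0 < 2 * (m : ℝ) + (2 - α) := by
      have : (1 : ℝ) ≤ m := by exact_mod_cast hm1
      linarith
    have h := mul_oddSinIntegral_eq_Ffun_mul hα3 hm1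
    rw [Ffun_succ α hm1]
    field_simp
    linear_combination (2 - 2 * α) * h
  rw [Finset.mul_sum, Finset.sum_congr rfl hterm, ← Finset.mul_sum,
    Finset.sum_Icc_sub (f := fun m => Ffun m α) (by omega), Nat.sub_add_cancel (by omega),
    Ffun_one]
  ring

lemma integral_neg_to_self_of_even {f : ℝ → ℝ} (hf : ∀ x, f (-x) = f x) {a : ℝ}
    (hint : IntervalIntegrable f volume 0 a) : ∫ x in -a..a, f x = 2 * ∫ x in 0..a, f x := by
  have hint_neg : IntervalIntegrable f volume (-a) 0 := by
    simpa [hf] using ((IntervalIntegrable.iff_comp_neg (f := f)).mp hint).symm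
  have hneg : ∫ x in -a..0, f x = ∫ x in 0..a, f x := by
    simpa [hf] using (integral_comp_neg (a := 0) (b := a) f).symm
  rw [← integral_add_adjacent_intervals hint_neg hint, hneg, two_mul]

lemma Kker_neg (σ β : ℝ) : Kker σ (-β) = Kker σ β := by
  rw [Kker, Kker, cos_neg]

lemma Kker_one_two_mul (θ : ℝ) : Kker 1 (2 * θ) = 2 * |sin θ| := by
  rw [Kker, show (1 : ℝ) ^ 2 - 2 * 1 * cos (2 * θ) + 1 = (2 * sin θ) ^ 2 by
      rw [mul_pow, sin_sq_eq_half_sub]; ring,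
    sqrt_sq_eq_abs, abs_mul, abs_two]

noncomputable def Jintegrand (n : ℕ) (α σ β : ℝ) : ℝ := (cos β - cos (n * β)) / Kker σ β ^ α

lemma Jintegrand_neg (n : ℕ) (α σ β : ℝ) : Jintegrand n α σ (-β) = Jintegrand n α σ β := by
  rw [Jintegrand, Jintegrand, Kker_neg, cos_neg, mul_neg, cos_neg]

lemma Jintegrand_one_two_mul {n : ℕ} (hn : 2 ≤ n) (α : ℝ) {θ : ℝ} (hs : 0 < sin θ) :
    Jintegrand n α 1 (2 * θ)
      = (∑ m ∈ Finset.Icc 1 (n - 1), 2 * (sin ((2 * m + 1) * θ) * sin θ ^ (1 - α))) / 2 ^ α := by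
  rw [Jintegrand, Kker_one_two_mul, abs_of_pos hs, cos_two_mul_sub_cos_nat_mul_two_mul hn,
    mul_rpow zero_le_two hs.le, rpow_sub hs, rpow_one, Finset.sum_div, Finset.sum_div]
  refine Finset.sum_congr rfl fun m _ => ?_
  field_simp

lemma intervalIntegrable_Jintegrand_one_two_mul {n : ℕ} (hn : 2 ≤ n) {α : ℝ} (hα3 : α < 3) :
    IntervalIntegrable (fun θ => Jintegrand n α 1 (2 * θ)) volume 0 (π / 2) := by
  have hsum : IntervalIntegrable (∑ m ∈ Finset.Icc 1 (n - 1),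
      fun θ => 2 * (sin ((2 * m + 1) * θ) * sin θ ^ (1 - α))) volume 0 (π / 2) :=
    IntervalIntegrable.sum _ fun m _ =>
      (intervalIntegrable_sin_odd_mul_mul_sin_rpow m (by linarith)).const_mul 2
  refine (hsum.div_const (2 ^ α)).congr fun θ hθ => ?_
  rw [uIoc_of_le (by linarith [pi_pos])] at hθ
  simp only [Finset.sum_apply]
  exact (Jintegrand_one_two_mul hn α (sin_pos_of_mem_Ioc_zero_pi_div_two hθ)).symm

lemma integral_Jintegrand_one_two_mul {n : ℕ} (hn : 2 ≤ n) {α : ℝ} (hα3 : α < 3) :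
    ∫ θ in 0..π / 2, Jintegrand n α 1 (2 * θ)
      = (∑ m ∈ Finset.Icc 1 (n - 1), 2 * oddSinIntegral (1 - α) m) / 2 ^ α := by
  rw [integral_congr_Ioo_of_le (by linarith [pi_pos]) fun θ hθ => Jintegrand_one_two_mul hn α
      (sin_pos_of_mem_Ioc_zero_pi_div_two (Ioo_subset_Ioc_self hθ)),
    intervalIntegral.integral_div, intervalIntegral.integral_finsetSum fun m _ =>
      (intervalIntegrable_sin_odd_mul_mul_sin_rpow m (by linarith)).const_mul 2]
  simp only [intervalIntegral.integral_const_mul, oddSinIntegral]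

theorem Jfun_one_eq_sum_oddSinIntegral {n : ℕ} (hn : 2 ≤ n) {α : ℝ} (hα3 : α < 3) :
    Jfun n α 1 = 4 / α * ((∑ m ∈ Finset.Icc 1 (n - 1), 2 * oddSinIntegral (1 - α) m) / 2 ^ α) := by
  have hhalf : ∫ β in -π..π, Jintegrand n α 1 β
      = 2 * ∫ θ in -(π / 2)..π / 2, Jintegrand n α 1 (2 * θ) := by
    rw [integral_comp_mul_left _ two_ne_zero, smul_eq_mul, mul_neg, mul_div_cancel₀ _ two_ne_zero]
    ring
  have heven : ∫ θ in -(π / 2)..π / 2, Jintegrand n α 1 (2 * θ)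
      = 2 * ∫ θ in 0..π / 2, Jintegrand n α 1 (2 * θ) :=
    integral_neg_to_self_of_even (fun θ => by rw [mul_neg, Jintegrand_neg])
      (intervalIntegrable_Jintegrand_one_two_mul hn hα3)
  calc Jfun n α 1 = 1 / α * ∫ β in -π..π, Jintegrand n α 1 β := rfl
    _ = _ := by rw [hhalf, heven, integral_Jintegrand_one_two_mul hn hα3]; ring

theorem Dconst_eq_oddSinIntegral_zero {α : ℝ} (hα3 : α < 3) :
    Dconst α = 4 * oddSinIntegral (1 - α) 0 / 2 ^ α := by
  rw [oddSinIntegral_zero, integral_sin_rpow (by linarith), Dconst,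
    show (1 - α + 1 + 1) / 2 = (3 - α) / 2 by ring, show (1 - α + 1) / 2 + 1 = 2 - α / 2 by ring]
  ring

theorem stmt5 (n : ℕ) (hn : 2 ≤ n) (α : ℝ) (hα0 : 0 < α) (hα3 : α < 3) (hα1 : α ≠ 1) :
    Jfun n α 1 = Dconst α * (1 - Ffun n α) / (1 - α) := by
  have hsum := one_sub_mul_sum_oddSinIntegral hα3 hn
  rw [Jfun_one_eq_sum_oddSinIntegral hn hα3, Dconst_eq_oddSinIntegral_zero hα3,
    eq_div_iff (sub_ne_zero.2 hα1.symm)]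
  field_simp
  linear_combination hsum
end

section
/- Let n ≥ 1 be an integer, let α > 0 be a real number, and let σ > 0 with σ ≠ 1. Then ∫_{−π}^{π} sin β · sin(nβ)/|σ − e^{iβ}|^{2+α} dβ = (n/(α·σ)) · ∫_{−π}^{π} cos(nβ)/|σ − e^{iβ}|^α dβ. -/
noncomputable def kerSq (σ β : ℝ) : ℝ := σ ^ 2 - 2 * σ * Real.cos β + 1

open Real intervalIntegral

lemma kerSq_nonneg (σ β : ℝ) : 0 ≤ kerSq σ β := by
  unfold kerSq
  nlinarith [abs_le.mp (abs_cos_le_one β), sq_nonneg (σ - 1), sq_nonneg (σ + 1)]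

lemma kerSq_pos {σ : ℝ} (hσ : 0 ≤ σ) (hσ1 : σ ≠ 1) (β : ℝ) : 0 < kerSq σ β := by
  have h : 0 < (σ - 1) ^ 2 := by
    have := sub_ne_zero.mpr hσ1
    positivity
  unfold kerSq
  nlinarith [cos_le_one β]

lemma Kker_rpow (σ β r : ℝ) : Kker σ β ^ r = kerSq σ β ^ (r / 2) := by
  rw [show Kker σ β = √(kerSq σ β) from rfl, sqrt_eq_rpow, ← rpow_mul (kerSq_nonneg σ β)]
  congr 1
  ring

lemma continuous_kerSq (σ : ℝ) : Continuous (kerSq σ) := by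
  unfold kerSq
  fun_prop

lemma hasDerivAt_kerSq (σ β : ℝ) : HasDerivAt (kerSq σ) (2 * σ * sin β) β := by
  have h := ((hasDerivAt_cos β).const_mul (2 * σ)).const_sub (σ ^ 2) |>.add_const 1
  exact h.congr_deriv (by ring)

lemma hasDerivAt_kerSq_rpow {σ β : ℝ} (h : kerSq σ β ≠ 0) (p : ℝ) :
    HasDerivAt (fun β ↦ kerSq σ β ^ p) (p * (2 * σ * sin β) * kerSq σ β ^ (p - 1)) β := by
  convert (hasDerivAt_kerSq σ β).rpow_const (p := p) (Or.inl h) using 1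
  ring

lemma integral_sin_mul_deriv_eq {v v' : ℝ → ℝ} (n : ℕ)
    (hv : ∀ x ∈ Set.uIcc (-π) π, HasDerivAt v (v' x) x)
    (hv' : IntervalIntegrable v' MeasureTheory.volume (-π) π) :
    ∫ β in -π..π, sin (n * β) * v' β = -(n * ∫ β in -π..π, cos (n * β) * v β) := by
  have hu : ∀ x ∈ Set.uIcc (-π) π,
      HasDerivAt (fun β ↦ sin (n * β)) (n * cos (n * x)) x := by
    intro x _
    exact ((hasDerivAt_id x).const_mul (n : ℝ) |>.sin).congr_deriv (by simp [mul_comm])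
  have hu' :
      IntervalIntegrable (fun β ↦ (n : ℝ) * cos (n * β)) MeasureTheory.volume (-π) π :=
    (by fun_prop : Continuous fun β ↦ (n : ℝ) * cos (n * β)).intervalIntegrable _ _
  rw [integral_mul_deriv_eq_deriv_mul hu hv hu' hv', mul_neg, sin_neg, sin_nat_mul_pi]
  simp only [neg_zero, zero_mul, sub_zero, zero_sub, mul_assoc, integral_const_mul]

theorem stmt10_general (n : ℕ) (α : ℝ) (hα : 0 < α)
    (σ : ℝ) (hσ : 0 < σ) (hσ1 : σ ≠ 1) :
    (∫ β in (-Real.pi)..Real.pi,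
        Real.sin β * Real.sin ((n:ℝ)*β) / (Kker σ β) ^ (2+α))
      = ((n:ℝ)/(α*σ)) *
        ∫ β in (-Real.pi)..Real.pi, Real.cos ((n:ℝ)*β) / (Kker σ β) ^ α := by
  have hq := kerSq_pos hσ.le hσ1
  set v' : ℝ → ℝ := fun β ↦ -(α / 2) * (2 * σ * sin β) * kerSq σ β ^ (-(α / 2) - 1)
  have hv' : IntervalIntegrable v' MeasureTheory.volume (-π) π := by
    refine Continuous.intervalIntegrable ?_ _ _
    exact (by fun_prop : Continuous fun β ↦ -(α / 2) * (2 * σ * sin β)).mul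
      ((continuous_kerSq σ).rpow_const fun β ↦ Or.inl (hq β).ne')
  have ibp : ∫ β in -π..π, sin (n * β) * v' β
      = -(n * ∫ β in -π..π, cos (n * β) * kerSq σ β ^ (-(α / 2))) :=
    integral_sin_mul_deriv_eq n (fun β _ ↦ hasDerivAt_kerSq_rpow (hq β).ne' _) hv'
  have lhs : ∀ β, sin β * sin (n * β) / Kker σ β ^ (2 + α)
      = -(α * σ)⁻¹ * (sin (n * β) * v' β) := by
    intro β
    simp only [v']
    rw [Kker_rpow, show -(α / 2) - 1 = -((2 + α) / 2) by ring, rpow_neg (hq β).le]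
    field_simp
  have rhs : ∀ β, cos (n * β) / Kker σ β ^ α = cos (n * β) * kerSq σ β ^ (-(α / 2)) := by
    intro β
    rw [Kker_rpow, rpow_neg (hq β).le, div_eq_mul_inv]
  simp only [lhs, rhs, integral_const_mul, ibp]
  field_simp

theorem stmt10 (n : ℕ) (hn : 1 ≤ n) (α : ℝ) (hα : 0 < α)
    (σ : ℝ) (hσ : 0 < σ) (hσ1 : σ ≠ 1) :
    (∫ β in (-Real.pi)..Real.pi,
        Real.sin β * Real.sin ((n:ℝ)*β) / (Kker σ β) ^ (2+α))
      = ((n:ℝ)/(α*σ)) *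
        ∫ β in (-Real.pi)..Real.pi, Real.cos ((n:ℝ)*β) / (Kker σ β) ^ α :=
  stmt10_general n α hα σ hσ hσ1
end

section
/- For every integer n ≥ 0 and every real number α, ∑_{j=0}^{n} C(n,j)·(−1)^j·∏_{k=1}^{j} (2k−1−α)/(2k−1) = (∏_{k=0}^{n−1} 1/(2k+1)) · ∏_{m=0}^{n−1} (2m+α), where C(n,j) denotes the binomial coefficient and empty products equal 1. -/
/-!
With `a = (1 - α)/2` and `b = 1/2` the `j`-th product is `(a)_j / (b)_j`, so the left side is the
terminating Gauss sum `S_n(a, b) = ∑ⱼ C(n, j) (-1)ʲ (a)_j / (b)_j = ₂F₁(-n, a; b; 1)`, and the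
theorem is the Chu–Vandermonde evaluation `S_n(a, b) = (b - a)_n / (b)_n`. That evaluation follows
by induction on `n`, simultaneously for all `a` and `b`: Pascal's rule together with
`(x)_{j+1} = x (x + 1)_j` gives `S_{n+1}(a, b) = S_n(a, b) - (a / b) S_n(a + 1, b + 1)`.
-/

open Finset Polynomial

theorem ascPochhammer_eval_eq_prod_range {S : Type*} [CommSemiring S] (n : ℕ) (a : S) :
    (ascPochhammer S n).eval a = ∏ k ∈ range n, (a + k) := by
  induction n with
  | zero => simp
  | succ n ih => rw [ascPochhammer_succ_eval, ih, prod_range_succ]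

theorem ascPochhammer_succ_eval_left {S : Type*} [CommSemiring S] (n : ℕ) (a : S) :
    (ascPochhammer S (n + 1)).eval a = a * (ascPochhammer S n).eval (a + 1) := by
  simp [ascPochhammer_succ_left]

theorem ascPochhammer_eval_ne_zero {R : Type*} [CommRing R] [IsDomain R] {b : R}
    (hb : ∀ k : ℕ, b + k ≠ 0) (n : ℕ) : (ascPochhammer R n).eval b ≠ 0 := by
  rw [ascPochhammer_eval_eq_prod_range]
  exact prod_ne_zero_iff.mpr fun k _ => hb k

section ChuVandermonde

variable {K : Type*} [Field K]

theorem sum_range_choose_mul_neg_one_pow_mul_ascPochhammer_div (n : ℕ) (a b : K)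
    (hb : ∀ k : ℕ, b + k ≠ 0) :
    ∑ j ∈ range (n + 1), (n.choose j : K) *
        ((-1) ^ j * ((ascPochhammer K j).eval a / (ascPochhammer K j).eval b)) =
      (ascPochhammer K n).eval (b - a) / (ascPochhammer K n).eval b := by
  induction n generalizing a b with
  | zero => simp
  | succ n ih =>
    have hb' : ∀ k : ℕ, b + 1 + k ≠ 0 := fun k => by
      rw [add_assoc, add_comm 1]; exact_mod_cast hb (k + 1)
    have pascal := sum_choose_succ_mul
      (fun j _ => (-1) ^ j * ((ascPochhammer K j).eval a / (ascPochhammer K j).eval b)) n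
    have shift : ∀ j, (-1 : K) ^ (j + 1) *
          ((ascPochhammer K (j + 1)).eval a / (ascPochhammer K (j + 1)).eval b) =
        -(a / b) * ((-1) ^ j *
          ((ascPochhammer K j).eval (a + 1) / (ascPochhammer K j).eval (b + 1))) := fun j => by
      rw [ascPochhammer_succ_eval_left, ascPochhammer_succ_eval_left]
      field_simp
      ring
    simp only [shift, mul_left_comm _ (-(a / b)), ← mul_sum] at pascal
    rw [pascal, ih a b hb, ih (a + 1) (b + 1) hb', add_sub_add_right_eq_sub]
    have hb0 : b ≠ 0 := by simpa using hb 0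
    have hB := ascPochhammer_eval_ne_zero hb n
    have hB' := ascPochhammer_eval_ne_zero hb' n
    have hbn := hb n
    have hsucc : b * (ascPochhammer K n).eval (b + 1) = (ascPochhammer K n).eval b * (b + n) := by
      rw [← ascPochhammer_succ_eval_left, ascPochhammer_succ_eval]
    rw [ascPochhammer_succ_eval, ascPochhammer_succ_eval]
    field_simp
    linear_combination (ascPochhammer K n).eval (b - a) * a * hsucc

end ChuVandermonde

theorem stmt16 (n : ℕ) (α : ℝ) :
    ∑ j ∈ Finset.range (n+1), (n.choose j : ℝ) * (-1)^j *
        ∏ k ∈ Finset.Icc 1 j, (2*(k:ℝ) - 1 - α) / (2*(k:ℝ) - 1)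
      = (∏ k ∈ Finset.range n, 1/(2*(k:ℝ)+1)) *
          ∏ m ∈ Finset.range n, (2*(m:ℝ)+α) := by
  have key := sum_range_choose_mul_neg_one_pow_mul_ascPochhammer_div n ((1 - α) / 2)
    (1 / 2) fun k => by positivity
  simp only [ascPochhammer_eval_eq_prod_range, ← prod_div_distrib] at key
  rw [← prod_mul_distrib]
  convert key using 2 with j _ k _
  · rw [mul_assoc, ← Ico_add_one_right_eq_Icc, prod_Ico_eq_prod_range, Nat.add_sub_cancel]
    refine congrArg _ (congrArg _ (prod_congr rfl fun k _ => ?_))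
    have hden : 2 * ((1 + k : ℕ) : ℝ) - 1 = 2 * k + 1 := by push_cast; ring
    have : (2 * (k : ℝ) + 1) ≠ 0 := by positivity
    rw [hden]
    field_simp
    ring
  · have : (2 * (k : ℝ) + 1) ≠ 0 := by positivity
    field_simp
    ring
end

section
/- Let n ≥ 1 be an integer and let α be a real number with 0 < α < 1. Then ∫_{0}^{π/2} cos(2nβ)/(sin β)^α dβ = (1/2) ∑_{j=0}^{n} C(2n, 2j)·(−1)^j · B(j + (1−α)/2, n − j + 1/2), where B denotes the Beta function. -/
/-- The Beta function `B(x,y) = ∫_0^1 t^{x-1}(1-t)^{y-1} dt`. -/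
noncomputable def Beta (x y : ℝ) : ℝ :=
  ∫ t in (0:ℝ)..1, t ^ (x-1) * (1-t) ^ (y-1)

/-!
By De Moivre, `cos (2nβ)` is the real part of `(cos β + i sin β)^(2n)`; in its binomial expansion
only the even powers of `sin β` survive, so the integrand is a finite sum of terms
`sin β ^ (2j - α) * cos β ^ (2(n - j))`. The substitution `t = sin² β` turns each of them into half
a Beta integral, and it is integrable because the Beta integrand is.
-/

open Real Set MeasureTheory
open scoped Interval

lemma intervalIntegrable_rpow_mul_one_sub_rpow {x y : ℝ} (hx : 0 < x) (hy : 0 < y) :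
    IntervalIntegrable (fun t : ℝ => t ^ (x - 1) * (1 - t) ^ (y - 1)) volume 0 1 := by
  refine (Complex.betaIntegral_convergent (u := x) (v := y) hx hy).norm.congr fun t ht => ?_
  rw [uIoc_of_le zero_le_one] at ht
  have h1t : 0 ≤ 1 - t := sub_nonneg.2 ht.2
  have hreal : (t : ℂ) ^ ((x : ℂ) - 1) * (1 - (t : ℂ)) ^ ((y : ℂ) - 1)
      = ((t ^ (x - 1) * (1 - t) ^ (y - 1) : ℝ) : ℂ) := by
    rw [Complex.ofReal_mul, Complex.ofReal_cpow ht.1.le, Complex.ofReal_cpow h1t]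
    push_cast; ring
  rw [hreal, Complex.norm_real,
    norm_of_nonneg (mul_nonneg (rpow_nonneg ht.1.le _) (rpow_nonneg h1t _))]

lemma injOn_sin_sq : InjOn (fun β => sin β ^ 2) (Ioo 0 (π / 2)) := by
  intro a ha b hb hab
  have hsa := sin_pos_of_pos_of_lt_pi ha.1 (by linarith [ha.2, pi_pos])
  have hsb := sin_pos_of_pos_of_lt_pi hb.1 (by linarith [hb.2, pi_pos])
  exact injOn_sin ⟨by linarith [ha.1, pi_pos], ha.2.le⟩ ⟨by linarith [hb.1, pi_pos], hb.2.le⟩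
    ((sq_eq_sq₀ hsa.le hsb.le).1 hab)

lemma image_sin_sq_Ioo : (fun β => sin β ^ 2) '' Ioo 0 (π / 2) = Ioo 0 1 := by
  ext t
  constructor
  · rintro ⟨β, hβ, rfl⟩
    have hs := sin_pos_of_pos_of_lt_pi hβ.1 (by linarith [hβ.2, pi_pos])
    have hc := cos_pos_of_mem_Ioo ⟨by linarith [hβ.1, pi_pos], hβ.2⟩
    exact ⟨by positivity, by nlinarith [sin_sq_add_cos_sq β]⟩
  · rintro ⟨ht0, ht1⟩
    have hst : √t < 1 := (sqrt_lt' one_pos).2 (by simpa using ht1)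
    refine ⟨arcsin √t, ⟨arcsin_pos.2 (sqrt_pos.2 ht0), ?_⟩, ?_⟩
    · exact (arcsin_lt_pi_div_two).2 hst
    · show sin (arcsin √t) ^ 2 = t
      rw [sin_arcsin (by linarith [sqrt_nonneg t]) hst.le, sq_sqrt ht0.le]

lemma hasDerivWithinAt_sin_sq (β : ℝ) (s : Set ℝ) :
    HasDerivWithinAt (fun β => sin β ^ 2) (2 * sin β * cos β) s β := by
  simpa [mul_assoc] using ((hasDerivAt_sin β).fun_pow 2).hasDerivWithinAt

lemma abs_two_mul_sin_mul_cos {β : ℝ} (hβ : β ∈ Ioo 0 (π / 2)) :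
    |2 * sin β * cos β| = 2 * sin β * cos β := by
  have hs := sin_pos_of_pos_of_lt_pi hβ.1 (by linarith [hβ.2, pi_pos])
  have hc := cos_pos_of_mem_Ioo ⟨by linarith [hβ.1, pi_pos], hβ.2⟩
  exact abs_of_pos (by positivity)

section SinSqSubstitution

variable {E : Type*} [NormedAddCommGroup E] [NormedSpace ℝ E]

lemma integral_Ioo_zero_one_eq_integral_sin_sq (g : ℝ → E) :
    ∫ t in Ioo 0 1, g t = ∫ β in Ioo 0 (π / 2), (2 * sin β * cos β) • g (sin β ^ 2) := by
  rw [← image_sin_sq_Ioo, integral_image_eq_integral_abs_deriv_smul measurableSet_Ioo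
    (fun β _ => hasDerivWithinAt_sin_sq β _) injOn_sin_sq]
  exact setIntegral_congr_fun measurableSet_Ioo fun β hβ => by rw [abs_two_mul_sin_mul_cos hβ]

lemma integrableOn_Ioo_zero_one_iff_sin_sq (g : ℝ → E) :
    IntegrableOn g (Ioo 0 1) ↔
      IntegrableOn (fun β => (2 * sin β * cos β) • g (sin β ^ 2)) (Ioo 0 (π / 2)) := by
  rw [← image_sin_sq_Ioo, integrableOn_image_iff_integrableOn_abs_deriv_smul measurableSet_Ioo
    (fun β _ => hasDerivWithinAt_sin_sq β _) injOn_sin_sq]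
  exact integrableOn_congr_fun (fun β hβ => by simp only [abs_two_mul_sin_mul_cos hβ])
    measurableSet_Ioo

end SinSqSubstitution

lemma two_mul_sin_mul_cos_mul_beta_integrand {β : ℝ} (hβ : β ∈ Ioo 0 (π / 2)) (x y : ℝ) :
    2 * sin β * cos β * ((sin β ^ 2) ^ (x - 1) * (1 - sin β ^ 2) ^ (y - 1))
      = 2 * (sin β ^ (2 * x - 1) * cos β ^ (2 * y - 1)) := by
  have hs := sin_pos_of_pos_of_lt_pi hβ.1 (by linarith [hβ.2, pi_pos])
  have hc := cos_pos_of_mem_Ioo ⟨by linarith [hβ.1, pi_pos], hβ.2⟩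
  rw [← cos_sq', ← rpow_two, ← rpow_two, ← rpow_mul hs.le, ← rpow_mul hc.le,
    show 2 * x - 1 = 1 + 2 * (x - 1) by ring, show 2 * y - 1 = 1 + 2 * (y - 1) by ring,
    rpow_add hs, rpow_add hc, rpow_one, rpow_one]
  ring

-- Holds for all `x y`: by the change of variables both integrands are integrable or not together,
-- and in the latter case both sides are the junk value `0`.
theorem integral_sin_rpow_mul_cos_rpow (x y : ℝ) :
    ∫ β in (0:ℝ)..(π / 2), sin β ^ (2 * x - 1) * cos β ^ (2 * y - 1) = Beta x y / 2 := by
  rw [Beta, intervalIntegral.integral_of_le zero_le_one, integral_Ioc_eq_integral_Ioo,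
    integral_Ioo_zero_one_eq_integral_sin_sq, intervalIntegral.integral_of_le (by positivity),
    integral_Ioc_eq_integral_Ioo, ← integral_div]
  refine setIntegral_congr_fun measurableSet_Ioo fun β hβ => ?_
  simp only [smul_eq_mul, two_mul_sin_mul_cos_mul_beta_integrand hβ]
  ring

theorem intervalIntegrable_sin_rpow_mul_cos_rpow {x y : ℝ} (hx : 0 < x) (hy : 0 < y) :
    IntervalIntegrable (fun β => sin β ^ (2 * x - 1) * cos β ^ (2 * y - 1)) volume 0 (π / 2) := by
  have h := (intervalIntegrable_rpow_mul_one_sub_rpow hx hy).1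
  rw [integrableOn_Ioc_iff_integrableOn_Ioo, integrableOn_Ioo_zero_one_iff_sin_sq] at h
  rw [intervalIntegrable_iff_integrableOn_Ioo_of_le (by positivity)]
  refine (integrableOn_congr_fun (fun β hβ => ?_) measurableSet_Ioo).1 (h.div_const 2)
  simp only [smul_eq_mul, two_mul_sin_mul_cos_mul_beta_integrand hβ]
  ring

section Expansion

open Finset

theorem Finset.sum_range_two_mul_add_one {M : Type*} [AddCommMonoid M] (f : ℕ → M) (n : ℕ) :
    ∑ k ∈ range (2 * n + 1), f k
      = ∑ j ∈ range (n + 1), f (2 * j) + ∑ j ∈ range n, f (2 * j + 1) := by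
  induction n with
  | zero => simp
  | succ n ih =>
    rw [show 2 * (n + 1) + 1 = 2 * n + 1 + 1 + 1 by ring, sum_range_succ, sum_range_succ, ih,
      sum_range_succ (fun j => f (2 * j)) (n + 1), sum_range_succ (fun j => f (2 * j + 1)) n,
      show 2 * (n + 1) = 2 * n + 1 + 1 by ring]
    abel

lemma Complex.I_pow_two_mul (j : ℕ) : Complex.I ^ (2 * j) = ((-1 : ℝ) ^ j : ℝ) := by
  push_cast [pow_mul, Complex.I_sq]; rfl

theorem Real.cos_two_mul_nat_mul_eq_sum (n : ℕ) (β : ℝ) :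
    cos (2 * n * β) = ∑ j ∈ range (n + 1),
      ((2 * n).choose (2 * j) : ℝ) * (-1) ^ j * (sin β ^ (2 * j) * cos β ^ (2 * (n - j))) := by
  have hDeMoivre : cos (2 * n * β) = ((sin β * Complex.I + cos β) ^ (2 * n)).re := by
    rw [add_comm, Complex.ofReal_cos, Complex.ofReal_sin, Complex.cos_add_sin_mul_I_pow,
      show ((2 * n : ℕ) : ℂ) * β = ((2 * n * β : ℝ) : ℂ) by push_cast; ring, Complex.add_re,
      Complex.mul_I_re, Complex.cos_ofReal_re, Complex.sin_ofReal_im, neg_zero, add_zero]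
  have hterm : ∀ k, ((sin β * Complex.I) ^ k * (cos β : ℂ) ^ (2 * n - k) * (2 * n).choose k).re
      = (2 * n).choose k * (sin β ^ k * cos β ^ (2 * n - k)) * (Complex.I ^ k).re := by
    intro k
    rw [mul_pow, show (sin β : ℂ) ^ k * Complex.I ^ k * (cos β : ℂ) ^ (2 * n - k) * (2 * n).choose k
        = (((2 * n).choose k * (sin β ^ k * cos β ^ (2 * n - k)) : ℝ) : ℂ) * Complex.I ^ k by
      push_cast; ring, Complex.re_ofReal_mul]
  rw [hDeMoivre, add_pow, Complex.re_sum]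
  simp only [hterm]
  rw [sum_range_two_mul_add_one]
  simp only [pow_succ Complex.I, Complex.I_pow_two_mul, Complex.ofReal_re, Complex.re_ofReal_mul,
    Complex.I_re, mul_zero, sum_const_zero, add_zero, ← Nat.mul_sub]
  exact sum_congr rfl fun j _ => by ring

lemma cos_two_mul_nat_mul_div_sin_rpow_eq_sum {β : ℝ} (hs : 0 < sin β) (n : ℕ) (α : ℝ) :
    cos (2 * n * β) / sin β ^ α = ∑ j ∈ range (n + 1),
      ((2 * n).choose (2 * j) : ℝ) * (-1) ^ j *
        (sin β ^ (2 * ((j : ℝ) + (1 - α) / 2) - 1) * cos β ^ (2 * ((n : ℝ) - j + 1 / 2) - 1)) := by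
  rw [cos_two_mul_nat_mul_eq_sum, sum_div]
  refine sum_congr rfl fun j hj => ?_
  have hjn : j ≤ n := Nat.lt_succ_iff.mp (mem_range.mp hj)
  rw [show 2 * ((j : ℝ) + (1 - α) / 2) - 1 = (2 * j : ℕ) - α by push_cast; ring,
    show 2 * ((n : ℝ) - j + 1 / 2) - 1 = (2 * (n - j) : ℕ) by push_cast [Nat.cast_sub hjn]; ring,
    rpow_sub hs, rpow_natCast, rpow_natCast]
  ring

end Expansion

theorem stmt18_general (n : ℕ) (α : ℝ) (hα1 : α < 1) :
    (∫ β in (0:ℝ)..(Real.pi/2), Real.cos (2*(n:ℝ)*β) / (Real.sin β) ^ α)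
      = (1/2) * ∑ j ∈ Finset.range (n+1),
          ((2*n).choose (2*j) : ℝ) * (-1)^j *
            Beta ((j:ℝ) + (1-α)/2) ((n:ℝ) - (j:ℝ) + 1/2) := by
  have hsin : ∀ β ∈ Ι 0 (π / 2), 0 < sin β := fun β hβ => by
    rw [uIoc_of_le (by positivity)] at hβ
    exact sin_pos_of_pos_of_lt_pi hβ.1 (by linarith [hβ.2, pi_pos])
  rw [intervalIntegral.integral_congr_ae
      (ae_of_all _ fun β hβ => cos_two_mul_nat_mul_div_sin_rpow_eq_sum (hsin β hβ) n α),
    intervalIntegral.integral_finsetSum fun j hj => ?_, Finset.mul_sum]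
  · refine Finset.sum_congr rfl fun j _ => ?_
    rw [intervalIntegral.integral_const_mul, integral_sin_rpow_mul_cos_rpow]
    ring
  · have hjn : (j : ℝ) ≤ n := by exact_mod_cast Nat.lt_succ_iff.mp (Finset.mem_range.mp hj)
    exact (intervalIntegrable_sin_rpow_mul_cos_rpow (by positivity) (by linarith)).const_mul _

theorem stmt18 (n : ℕ) (hn : 1 ≤ n) (α : ℝ) (hα0 : 0 < α) (hα1 : α < 1) :
    (∫ β in (0:ℝ)..(Real.pi/2), Real.cos (2*(n:ℝ)*β) / (Real.sin β) ^ α)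
      = (1/2) * ∑ j ∈ Finset.range (n+1),
          ((2*n).choose (2*j) : ℝ) * (-1)^j *
            Beta ((j:ℝ) + (1-α)/2) ((n:ℝ) - (j:ℝ) + 1/2) :=
  stmt18_general n α hα1
end
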